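/- arXiv:1608.06885 — 5 statements merged into one kernel-verified Lean document; each statement's English description precedes it below -/
import Mathlib

section
/- Let Q be an even integral lattice and let ε₁, ε₂ : Q × Q → {±1} be two bimultiplicative maps each satisfying εᵢ(α,α) = (−1)^{(α|α)/2} for all α ∈ Q. Then there exists a function η : Q → {±1} such that ε₁(α,β) = η(α)·η(β)·η(α+β)·ε₂(α,β) for all α, β ∈ Q (i.e., any two such 2-cocycles are equivalent). -/
/-!
The quotient `δ = ε₁ ε₂` is bimultiplicative with `δ(α, α) = 1`, i.e. an alternating form with
values in a group of exponent 2. Ordering a basis of `Q`, such a form is `γ - γᵀ` where `γ` is its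
strictly upper triangular part, and then `η(α) = γ(α, α)` satisfies
`η(α + β) = η(α) η(β) γ(α, β) γ(β, α) = η(α) η(β) δ(α, β)`.
-/

open Module

namespace LinearMap

variable {R M N : Type*} [CommRing R] [AddCommGroup M] [Module R M] [AddCommGroup N] [Module R N]

theorem IsAlt.exists_eq_sub_flip_of_basis {ι : Type*} [LinearOrder ι] (b : Basis ι R M)
    {δ : M →ₗ[R] M →ₗ[R] N} (hδ : δ.IsAlt) : ∃ γ : M →ₗ[R] M →ₗ[R] N, δ = γ - γ.flip := by
  refine ⟨b.constr R fun i => b.constr R fun j => if i < j then δ (b i) (b j) else 0,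
    b.ext fun i => b.ext fun j => ?_⟩
  simp only [sub_apply, flip_apply, Basis.constr_basis]
  rcases lt_trichotomy i j with h | rfl | h
  · simp [h, h.not_gt]
  · simp [hδ.self_eq_zero]
  · simp [h, h.not_gt, hδ.neg]

theorem IsAlt.exists_eq_sub_flip [Module.Free R M] {δ : M →ₗ[R] M →ₗ[R] N} (hδ : δ.IsAlt) :
    ∃ γ : M →ₗ[R] M →ₗ[R] N, δ = γ - γ.flip :=
  letI := IsWellOrder.linearOrder (WellOrderingRel (α := Free.ChooseBasisIndex R M))
  hδ.exists_eq_sub_flip_of_basis (Free.chooseBasis R M)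

theorem IsAlt.exists_eq_add_add_of_add_self_eq_zero [Module.Free R M]
    (hN : ∀ a : N, a + a = 0) {δ : M →ₗ[R] M →ₗ[R] N} (hδ : δ.IsAlt) :
    ∃ η : M → N, ∀ x y, δ x y = η x + η y + η (x + y) := by
  obtain ⟨γ, rfl⟩ := hδ.exists_eq_sub_flip
  refine ⟨fun x => γ x x, fun x y => ?_⟩
  have hneg : -γ y x = γ y x := neg_eq_of_add_eq_zero_left (hN _)
  calc (γ - γ.flip) x y
      = γ x y + γ y x := by rw [sub_apply, sub_apply, flip_apply, sub_eq_add_neg, hneg]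
    _ = (γ x x + γ x x) + (γ y y + γ y y) + (γ x y + γ y x) := by rw [hN, hN]; abel
    _ = γ x x + γ y y + γ (x + y) (x + y) := by simp only [map_add, add_apply]; abel

variable {Q G : Type*} [AddCommGroup Q] [CommGroup G]

def ofBimultiplicative (ε : Q → Q → G) (hl : ∀ α α' β, ε (α + α') β = ε α β * ε α' β)
    (hr : ∀ α β β', ε α (β + β') = ε α β * ε α β') : Q →ₗ[ℤ] Q →ₗ[ℤ] Additive G :=
  (AddMonoidHom.mk'
    (fun α => (AddMonoidHom.mk' (fun β => Additive.ofMul (ε α β)) (hr α)).toIntLinearMap)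
    fun α α' => LinearMap.ext (hl α α')).toIntLinearMap

@[simp]
theorem ofBimultiplicative_apply (ε : Q → Q → G) (hl : ∀ α α' β, ε (α + α') β = ε α β * ε α' β)
    (hr : ∀ α β β', ε α (β + β') = ε α β * ε α β') (α β : Q) :
    ofBimultiplicative ε hl hr α β = Additive.ofMul (ε α β) :=
  rfl

end LinearMap

theorem stmt_1_general (Q : Type*) [AddCommGroup Q] [Module.Free ℤ Q]
    (B : Q → Q → ℤ)
    (ε₁ ε₂ : Q → Q → ℤˣ)
    (hbml₁ : ∀ α α' β : Q, ε₁ (α + α') β = ε₁ α β * ε₁ α' β)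
    (hbmr₁ : ∀ α β β' : Q, ε₁ α (β + β') = ε₁ α β * ε₁ α β')
    (hdiag₁ : ∀ α : Q, ε₁ α α = (-1 : ℤˣ) ^ (B α α / 2))
    (hbml₂ : ∀ α α' β : Q, ε₂ (α + α') β = ε₂ α β * ε₂ α' β)
    (hbmr₂ : ∀ α β β' : Q, ε₂ α (β + β') = ε₂ α β * ε₂ α β')
    (hdiag₂ : ∀ α : Q, ε₂ α α = (-1 : ℤˣ) ^ (B α α / 2)) :
    ∃ η : Q → ℤˣ, ∀ α β : Q, ε₁ α β = η α * η β * η (α + β) * ε₂ α β := by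
  have hchar : ∀ a : Additive ℤˣ, a + a = 0 := Int.units_mul_self
  set L₁ := LinearMap.ofBimultiplicative ε₁ hbml₁ hbmr₁
  set L₂ := LinearMap.ofBimultiplicative ε₂ hbml₂ hbmr₂
  have hδ : (L₁ + L₂).IsAlt := fun α => by
    rw [LinearMap.add_apply, LinearMap.add_apply, LinearMap.ofBimultiplicative_apply, hdiag₁,
      ← hdiag₂]
    exact hchar _
  obtain ⟨η, hη⟩ := hδ.exists_eq_add_add_of_add_self_eq_zero hchar
  refine ⟨fun α => (η α).toMul, fun α β => Additive.ofMul.injective ?_⟩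
  calc Additive.ofMul (ε₁ α β)
      = (L₁ + L₂) α β + L₂ α β := by
        rw [LinearMap.add_apply, LinearMap.add_apply, add_assoc, hchar, add_zero]; rfl
    _ = η α + η β + η (α + β) + Additive.ofMul (ε₂ α β) := by rw [hη]; rfl

/-- Any two bimultiplicative 2-cocycles `ε₁, ε₂ : Q × Q → {±1}` on an even
integral lattice `Q` satisfying `εᵢ(α,α) = (-1)^(|α|²/2)` are equivalent:
there is `η : Q → {±1}` with `ε₁(α,β) = η(α)η(β)η(α+β)ε₂(α,β)`. -/
theorem stmt_1 (Q : Type*) [AddCommGroup Q] [Module.Free ℤ Q] [Module.Finite ℤ Q]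
    (B : Q → Q → ℤ)
    (haddl : ∀ α α' β : Q, B (α + α') β = B α β + B α' β)
    (haddr : ∀ α β β' : Q, B α (β + β') = B α β + B α β')
    (hsymm : ∀ α β : Q, B α β = B β α)
    (heven : ∀ α : Q, 2 ∣ B α α)
    (ε₁ ε₂ : Q → Q → ℤˣ)
    (hbml₁ : ∀ α α' β : Q, ε₁ (α + α') β = ε₁ α β * ε₁ α' β)
    (hbmr₁ : ∀ α β β' : Q, ε₁ α (β + β') = ε₁ α β * ε₁ α β')
    (hdiag₁ : ∀ α : Q, ε₁ α α = (-1 : ℤˣ) ^ (B α α / 2))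
    (hbml₂ : ∀ α α' β : Q, ε₂ (α + α') β = ε₂ α β * ε₂ α' β)
    (hbmr₂ : ∀ α β β' : Q, ε₂ α (β + β') = ε₂ α β * ε₂ α β')
    (hdiag₂ : ∀ α : Q, ε₂ α α = (-1 : ℤˣ) ^ (B α α / 2)) :
    ∃ η : Q → ℤˣ, ∀ α β : Q, ε₁ α β = η α * η β * η (α + β) * ε₂ α β :=
  stmt_1_general Q B ε₁ ε₂ hbml₁ hbmr₁ hdiag₁ hbml₂ hbmr₂ hdiag₂
end

section
/- Let Q be an even integral lattice, let σ : Q → Q be an isometry (an additive automorphism with (σα|σβ) = (α|β) for all α, β ∈ Q), and let ε : Q × Q → {±1} be a bimultiplicative map with ε(α,α) = (−1)^{(α|α)/2} for all α ∈ Q. Then there exists a function η : Q → {±1} such that η(α+β)·ε(σα,σβ) = η(α)·η(β)·ε(α,β) for all α, β ∈ Q. -/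
/-!
The form `f(α,β) = ε(σα,σβ)·ε(α,β)` is bimultiplicative, and alternating because `σ` preserves
`(α|α)`. On a free `ℤ`-module an alternating bilinear form is `c - cᵀ`, where `c` is its strictly
upper triangular part with respect to an ordered basis. Since `{±1}` has exponent two,
`η(α) = c(α,α)` then satisfies `η(α+β) = η(α)·η(β)·f(α,β)`, which is the claim.
-/

theorem LinearMap.IsAlt.exists_eq_sub_flip_s2 {R M N : Type*} [CommRing R] [AddCommGroup M]
    [Module R M] [Module.Free R M] [AddCommGroup N] [Module R N] {f : M →ₗ[R] M →ₗ[R] N}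
    (hf : f.IsAlt) : ∃ c : M →ₗ[R] M →ₗ[R] N, f = c - c.flip := by
  obtain ⟨ι, b⟩ := Module.Free.exists_basis (R := R) (M := M)
  let : LinearOrder ι := IsWellOrder.linearOrder WellOrderingRel
  refine ⟨b.constr R fun i => b.constr R fun j => if i < j then f (b i) (b j) else 0,
    b.ext fun i => b.ext fun j => ?_⟩
  obtain h | rfl | h := lt_trichotomy i j
  · simp [h, h.not_gt]
  · simp [hf.self_eq_zero]
  · simpa [h, h.not_gt] using (hf.neg (b j) (b i)).symm

def bilinOfBimultiplicative {Q G : Type*} [AddCommGroup Q] [CommGroup G] (f : Q → Q → G)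
    (hl : ∀ α α' β, f (α + α') β = f α β * f α' β) (hr : ∀ α β β', f α (β + β') = f α β * f α β') :
    Q →ₗ[ℤ] Q →ₗ[ℤ] Additive G :=
  AddMonoidHom.toIntLinearMap <| AddMonoidHom.mk'
    (fun α => (AddMonoidHom.mk' (fun β => Additive.ofMul (f α β)) (hr α)).toIntLinearMap)
    fun α α' => by ext β; exact hl α α' β

theorem exists_coboundary_eq_of_bimultiplicative_of_apply_self {Q : Type*} [AddCommGroup Q]
    [Module.Free ℤ Q] (f : Q → Q → ℤˣ) (hl : ∀ α α' β, f (α + α') β = f α β * f α' β)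
    (hr : ∀ α β β', f α (β + β') = f α β * f α β') (hdiag : ∀ α, f α α = 1) :
    ∃ η : Q → ℤˣ, ∀ α β, η (α + β) = η α * η β * f α β := by
  obtain ⟨c, hc⟩ := LinearMap.IsAlt.exists_eq_sub_flip_s2 (f := bilinOfBimultiplicative f hl hr) hdiag
  refine ⟨fun α => (c α α).toMul, fun α β => ?_⟩
  have hf : f α β = (c α β).toMul / (c β α).toMul := congr($hc α β)
  rw [hf, div_eq_mul_inv, Int.units_inv_eq_self]
  simp only [map_add, LinearMap.add_apply, toMul_add]
  ac_rfl

theorem stmt_2_general (Q : Type*) [AddCommGroup Q] [Module.Free ℤ Q]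
    (B : Q → Q → ℤ)
    (σ : Q ≃+ Q)
    (hiso : ∀ α β : Q, B (σ α) (σ β) = B α β)
    (ε : Q → Q → ℤˣ)
    (hbml : ∀ α α' β : Q, ε (α + α') β = ε α β * ε α' β)
    (hbmr : ∀ α β β' : Q, ε α (β + β') = ε α β * ε α β')
    (hdiag : ∀ α : Q, ε α α = (-1 : ℤˣ) ^ (B α α / 2)) :
    ∃ η : Q → ℤˣ, ∀ α β : Q, η (α + β) * ε (σ α) (σ β) = η α * η β * ε α β := by
  obtain ⟨η, hη⟩ := exists_coboundary_eq_of_bimultiplicative_of_apply_self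
    (fun α β => ε (σ α) (σ β) * ε α β)
    (fun α α' β => by simp only [map_add, hbml]; exact mul_mul_mul_comm ..)
    (fun α β β' => by simp only [map_add, hbmr]; exact mul_mul_mul_comm ..)
    (fun α => by rw [hdiag, hdiag, hiso, Int.units_mul_self])
  refine ⟨η, fun α β => ?_⟩
  rw [hη, mul_assoc, mul_right_comm (ε _ _), Int.units_mul_self, one_mul]

/-- For an isometry `σ` of an even integral lattice `Q` and a bimultiplicative
2-cocycle `ε` with `ε(α,α) = (-1)^(|α|²/2)`, there is a function
`η : Q → {±1}` with `η(α+β)·ε(σα,σβ) = η(α)·η(β)·ε(α,β)`. -/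
theorem stmt_2 (Q : Type*) [AddCommGroup Q] [Module.Free ℤ Q] [Module.Finite ℤ Q]
    (B : Q → Q → ℤ)
    (haddl : ∀ α α' β : Q, B (α + α') β = B α β + B α' β)
    (haddr : ∀ α β β' : Q, B α (β + β') = B α β + B α β')
    (hsymm : ∀ α β : Q, B α β = B β α)
    (heven : ∀ α : Q, 2 ∣ B α α)
    (σ : Q ≃+ Q)
    (hiso : ∀ α β : Q, B (σ α) (σ β) = B α β)
    (ε : Q → Q → ℤˣ)
    (hbml : ∀ α α' β : Q, ε (α + α') β = ε α β * ε α' β)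
    (hbmr : ∀ α β β' : Q, ε α (β + β') = ε α β * ε α β')
    (hdiag : ∀ α : Q, ε α α = (-1 : ℤˣ) ^ (B α α / 2)) :
    ∃ η : Q → ℤˣ, ∀ α β : Q, η (α + β) * ε (σ α) (σ β) = η α * η β * ε α β :=
  stmt_2_general Q B σ hiso ε hbml hbmr hdiag
end

section
/- Let Q be an even integral lattice, let σ : Q → Q be an isometry, and let ε : Q × Q → {±1} be a bimultiplicative map with ε(α,α) = (−1)^{(α|α)/2} for all α ∈ Q. Then the function η : Q → {±1} satisfying η(α+β)·ε(σα,σβ) = η(α)·η(β)·ε(α,β) for all α, β ∈ Q can be chosen so that, in addition, η(α) = 1 for every α ∈ Q with σα = α. -/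
/-!
The defect `d(α, β) = ε(α, β) ε(σα, σβ)` is a bimultiplicative sign form with `d(α, α) = 1`,
because `σ` preserves `(α|α)`. On a free `ℤ`-module such a form is a coboundary,
`d(α, β) = q(α + β) / (q(α) q(β))`: written additively it is `b - bᵀ` for a bilinear `b` that is
triangular in a basis, and `q(α) = b(α, α)`. The image of `σ - 1` is a subgroup of `Q`, hence
free, so there is an additive retraction `r` of `Q` onto the fixed lattice `Q^σ`. As `d` is trivial
on `Q^σ`, `q ∘ r` is a character, and `η = q · (q ∘ r)` works: for `σα = α` it is `q(α)² = 1`.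
-/

open Module

namespace LinearMap

variable {R M N : Type*} [CommRing R] [AddCommGroup M] [Module R M] [AddCommGroup N] [Module R N]

theorem IsAlt.exists_sub_flip_eq [Module.Free R M] {c : M →ₗ[R] M →ₗ[R] N} (hc : c.IsAlt) :
    ∃ b : M →ₗ[R] M →ₗ[R] N, b - b.flip = c := by
  obtain ⟨ι, bm⟩ := Module.Free.exists_basis (R := R) (M := M)
  let : LinearOrder ι := IsWellOrder.linearOrder WellOrderingRel
  refine ⟨bm.constr R fun i => bm.constr R fun j => if i < j then c (bm i) (bm j) else 0,
    bm.ext fun i => bm.ext fun j => ?_⟩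
  obtain h | rfl | h := lt_trichotomy i j
  · simp [Basis.constr_basis, h, h.not_gt]
  · simp [Basis.constr_basis, hc.self_eq_zero]
  · simp [Basis.constr_basis, h, h.not_gt, ← hc.neg (bm j) (bm i)]

end LinearMap

section Bimultiplicative

variable {M G : Type*} [AddCommGroup M] [CommGroup G]

def bimulToIntBilin (d : M → M → G) (hl : ∀ x x' y, d (x + x') y = d x y * d x' y)
    (hr : ∀ x y y', d x (y + y') = d x y * d x y') : M →ₗ[ℤ] M →ₗ[ℤ] Additive G :=
  LinearMap.mk₂ ℤ (fun x y => Additive.ofMul (d x y))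
    (fun x x' y => by simp only [hl, ofMul_mul])
    (fun n x y => map_zsmul (AddMonoidHom.mk' (fun x => Additive.ofMul (d x y))
      fun x x' => by simp only [hl, ofMul_mul]) n x)
    (fun x y y' => by simp only [hr, ofMul_mul])
    (fun n x y => map_zsmul (AddMonoidHom.mk' (fun y => Additive.ofMul (d x y))
      fun y y' => by simp only [hr, ofMul_mul]) n y)

@[simp]
theorem bimulToIntBilin_apply (d : M → M → G) (hl : ∀ x x' y, d (x + x') y = d x y * d x' y)
    (hr : ∀ x y y', d x (y + y') = d x y * d x y') (x y : M) :
    bimulToIntBilin d hl hr x y = Additive.ofMul (d x y) := rfl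

theorem exists_mul_eq_mul_mul_of_bimul [Module.Free ℤ M] (d : M → M → ℤˣ)
    (hl : ∀ x x' y, d (x + x') y = d x y * d x' y) (hr : ∀ x y y', d x (y + y') = d x y * d x y')
    (hdiag : ∀ x, d x x = 1) :
    ∃ q : M → ℤˣ, ∀ x y, q (x + y) = q x * q y * d x y := by
  obtain ⟨b, hb⟩ := LinearMap.IsAlt.exists_sub_flip_eq (c := bimulToIntBilin d hl hr)
    fun x => by simp [hdiag]
  refine ⟨fun x => (b x x).toMul, fun x y => ?_⟩
  have hd : d x y = (b x y - b y x).toMul := by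
    rw [← toMul_ofMul (d x y), ← bimulToIntBilin_apply d hl hr, ← hb]; rfl
  simp only [hd, map_add, LinearMap.add_apply, toMul_add, toMul_sub, div_eq_mul_inv,
    Int.units_inv_eq_self]
  ac_rfl

end Bimultiplicative

theorem LinearMap.exists_projection_onto_ker {R M N : Type*} [Ring R] [AddCommGroup M]
    [Module R M] [AddCommGroup N] [Module R N] (f : M →ₗ[R] N) [Projective R (range f)] :
    ∃ r : M →ₗ[R] M, (∀ x, f (r x) = 0) ∧ ∀ x, f x = 0 → r x = x := by
  obtain ⟨s, hs⟩ := Module.projective_lifting_property f.rangeRestrict LinearMap.id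
    f.surjective_rangeRestrict
  have hfs : ∀ x, f (s (f.rangeRestrict x)) = f x := fun x =>
    congrArg Subtype.val (LinearMap.congr_fun hs (f.rangeRestrict x))
  refine ⟨LinearMap.id - s ∘ₗ f.rangeRestrict, fun x => by simp [hfs], fun x hx => ?_⟩
  have : f.rangeRestrict x = 0 := Subtype.ext hx
  simp [this]

theorem stmt_3_general (Q : Type*) [AddCommGroup Q] [Module.Free ℤ Q] [Module.Finite ℤ Q]
    (B : Q → Q → ℤ)
    (σ : Q ≃+ Q)
    (hiso : ∀ α β : Q, B (σ α) (σ β) = B α β)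
    (ε : Q → Q → ℤˣ)
    (hbml : ∀ α α' β : Q, ε (α + α') β = ε α β * ε α' β)
    (hbmr : ∀ α β β' : Q, ε α (β + β') = ε α β * ε α β')
    (hdiag : ∀ α : Q, ε α α = (-1 : ℤˣ) ^ (B α α / 2)) :
    ∃ η : Q → ℤˣ,
      (∀ α β : Q, η (α + β) * ε (σ α) (σ β) = η α * η β * ε α β) ∧
      (∀ α : Q, σ α = α → η α = 1) := by
  obtain ⟨q, hq⟩ := exists_mul_eq_mul_mul_of_bimul (fun α β => ε α β * ε (σ α) (σ β))
    (fun α α' β => by simp only [hbml, map_add]; ac_rfl)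
    (fun α β β' => by simp only [hbmr, map_add]; ac_rfl)
    (fun α => by rw [hdiag, hdiag, hiso, Int.units_mul_self])
  obtain ⟨r, hr_fixed, hr_id⟩ :=
    (σ.toIntLinearEquiv.toLinearMap - LinearMap.id).exists_projection_onto_ker
  have hσr : ∀ α, σ (r α) = r α := fun α => sub_eq_zero.mp (hr_fixed α)
  have hqr : ∀ α β, q (r (α + β)) = q (r α) * q (r β) := fun α β => by
    rw [map_add, hq, hσr, hσr, Int.units_mul_self, mul_one]
  refine ⟨fun α => q α * q (r α), fun α β => ?_, fun α hα => ?_⟩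
  · calc q (α + β) * q (r (α + β)) * ε (σ α) (σ β)
        = q α * q (r α) * (q β * q (r β)) * ε α β * (ε (σ α) (σ β) * ε (σ α) (σ β)) := by
          rw [hq, hqr]; ac_rfl
      _ = q α * q (r α) * (q β * q (r β)) * ε α β := by rw [Int.units_mul_self, mul_one]
  · show q α * q (r α) = 1
    rw [hr_id α (sub_eq_zero.mpr hα), Int.units_mul_self]

/-- The function `η` with `η(α+β)·ε(σα,σβ) = η(α)·η(β)·ε(α,β)` can be chosen
so that `η(α) = 1` whenever `σα = α`. -/
theorem stmt_3 (Q : Type*) [AddCommGroup Q] [Module.Free ℤ Q] [Module.Finite ℤ Q]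
    (B : Q → Q → ℤ)
    (haddl : ∀ α α' β : Q, B (α + α') β = B α β + B α' β)
    (haddr : ∀ α β β' : Q, B α (β + β') = B α β + B α β')
    (hsymm : ∀ α β : Q, B α β = B β α)
    (heven : ∀ α : Q, 2 ∣ B α α)
    (σ : Q ≃+ Q)
    (hiso : ∀ α β : Q, B (σ α) (σ β) = B α β)
    (ε : Q → Q → ℤˣ)
    (hbml : ∀ α α' β : Q, ε (α + α') β = ε α β * ε α' β)
    (hbmr : ∀ α β β' : Q, ε α (β + β') = ε α β * ε α β')
    (hdiag : ∀ α : Q, ε α α = (-1 : ℤˣ) ^ (B α α / 2)) :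
    ∃ η : Q → ℤˣ,
      (∀ α β : Q, η (α + β) * ε (σ α) (σ β) = η α * η β * ε α β) ∧
      (∀ α : Q, σ α = α → η α = 1) :=
  stmt_3_general Q B σ hiso ε hbml hbmr hdiag
end

section
/- Let L be a free ℤ-module of finite rank with a symmetric positive-definite bilinear form (·|·) extended ℝ-bilinearly to L⊗ℝ, and let λ ∈ L⊗ℝ. For q ∈ (0,1) the theta series θ_{λ+L}(q) = Σ_{α∈L} q^{(λ+α|λ+α)/2} converges, and lim_{q→1⁻} θ_{λ+L}(q)/θ_{L}(q) = 1, where θ_L(q) = Σ_{α∈L} q^{(α|α)/2}. -/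
/-!
Put `θ_l(t) = ∑_{α ∈ L} exp (-t (l + α | l + α))`, so that `θ_{λ+L}(q) = θ_λ(t)` for
`q = exp (-2t)`, and `q → 1⁻` becomes `t → 0⁺`.

Integrality makes the form positive definite on `L ⊗ ℝ`: it is nonnegative by density of the
rational points, and a real null vector would make the integral Gram matrix singular, producing
an integral null vector. Comparison with a product of one-dimensional Gaussian sums then gives
convergence.

Pairing `α` with `-α`, the parallelogram law and convexity of `exp` give
`θ_l(t) ≥ exp (-t (l | l)) θ_0(t)`. Conversely,
`(l + u | l + u) ≥ (1 - ε) (u | u) - (ε⁻¹ - 1) (l | l)` gives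
`θ_l(t) ≤ exp (t (ε⁻¹ - 1) (l | l)) θ_0((1 - ε) t)`, and `θ_0((1 - ε) t) ≤ (1 + 2εK) θ_0(t)` by
convexity of `θ_0` and the doubling bound `θ_0(t / 2) ≤ K θ_0(t)`; the latter follows from the
previous inequality applied to the `2ⁿ` cosets of `2L` in `L`. Taking `ε = √t` squeezes the
ratio to `1`.
-/

open Real Filter Topology Matrix Finset
open scoped TensorProduct

theorem tendsto_floor_mul_div_atTop (a : ℝ) :
    Tendsto (fun x : ℝ => (⌊a * x⌋ : ℝ) / x) atTop (𝓝 a) := by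
  have hlow : Tendsto (fun x : ℝ => a - x⁻¹) atTop (𝓝 a) := by
    simpa using (tendsto_const_nhds (x := a)).sub tendsto_inv_atTop_zero
  refine tendsto_of_tendsto_of_tendsto_of_le_of_le' hlow tendsto_const_nhds ?_ ?_ <;>
    filter_upwards [eventually_gt_atTop 0] with x hx
  · rw [le_div_iff₀ hx, sub_mul, inv_mul_cancel₀ hx.ne']
    exact (Int.sub_one_lt_floor _).le
  · rw [div_le_iff₀ hx]
    exact Int.floor_le _

section IntegralGramMatrix

variable {ι : Type*} [Fintype ι]

theorem Matrix.intCast_dotProduct_mulVec (G : Matrix ι ι ℤ) (k : ι → ℤ) :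
    ((↑) ∘ k) ⬝ᵥ G.map ((↑) : ℤ → ℝ) *ᵥ ((↑) ∘ k) = ((k ⬝ᵥ G *ᵥ k : ℤ) : ℝ) := by
  simp [dotProduct, mulVec]

theorem Matrix.posSemidef_map_intCast {G : Matrix ι ι ℤ} (hG : G.IsSymm)
    (hG0 : ∀ k, 0 ≤ k ⬝ᵥ G *ᵥ k) : (G.map ((↑) : ℤ → ℝ)).PosSemidef := by
  refine posSemidef_iff_dotProduct_mulVec.2 ⟨isHermitian_iff_isSymm.2 (hG.map _), fun x => ?_⟩
  set Q : (ι → ℝ) → ℝ := fun y => y ⬝ᵥ G.map ((↑) : ℤ → ℝ) *ᵥ y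
  have hQ : Continuous Q := by fun_prop
  -- approximate `x` by the rescaled lattice points `⌊s x⌋ / s`
  set k : ℝ → ι → ℤ := fun s i => ⌊x i * s⌋
  have hk : Tendsto (fun s : ℝ => s⁻¹ • ((↑) ∘ k s)) atTop (𝓝 x) :=
    tendsto_pi_nhds.2 fun i => by
      simpa [k, div_eq_inv_mul] using tendsto_floor_mul_div_atTop (x i)
  refine ge_of_tendsto ((hQ.tendsto x).comp hk) ?_
  filter_upwards [eventually_gt_atTop 0] with s hs
  simp only [Function.comp_apply, Q, smul_dotProduct, mulVec_smul, dotProduct_smul,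
    intCast_dotProduct_mulVec, smul_eq_mul, ← mul_assoc]
  exact mul_nonneg (by positivity) (Int.cast_nonneg (hG0 _))

theorem Matrix.posDef_map_intCast [DecidableEq ι] {G : Matrix ι ι ℤ} (hG : G.IsSymm)
    (hG0 : ∀ k ≠ 0, 0 < k ⬝ᵥ G *ᵥ k) : (G.map ((↑) : ℤ → ℝ)).PosDef := by
  have hpsd := posSemidef_map_intCast hG fun k => by
    rcases eq_or_ne k 0 with rfl | hk
    · simp
    · exact (hG0 k hk).le
  rw [hpsd.posDef_iff_det_ne_zero, ← Int.cast_det, Int.cast_ne_zero]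
  intro hdet
  obtain ⟨k, hk, hGk⟩ := exists_mulVec_eq_zero_iff.2 hdet
  exact (hG0 k hk).ne' (by rw [hGk, dotProduct_zero])

theorem Matrix.PosDef.exists_pos_mul_dotProduct_self_le {M : Matrix ι ι ℝ} (hM : M.PosDef) :
    ∃ c > 0, ∀ x, c * (x ⬝ᵥ x) ≤ x ⬝ᵥ M *ᵥ x := by
  have hQ : ∀ x ≠ 0, 0 < x ⬝ᵥ M *ᵥ x := fun x hx => by
    simpa using hM.dotProduct_mulVec_pos hx
  set ratio : (ι → ℝ) → ℝ := fun x => (x ⬝ᵥ x) / (x ⬝ᵥ M *ᵥ x)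
  have hratio : ∀ x, ∀ s ≠ (0 : ℝ), ratio (s • x) = ratio x := fun x s hs => by
    simp only [ratio, smul_dotProduct, dotProduct_smul, mulVec_smul, smul_eq_mul, ← mul_assoc]
    exact mul_div_mul_left _ _ (mul_ne_zero hs hs)
  obtain ⟨C, hC⟩ := (isCompact_sphere (0 : ι → ℝ) 1).exists_bound_of_continuousOn
    (f := ratio) <| ContinuousOn.div (by fun_prop) (by fun_prop) fun x hx =>
      (hQ x (ne_zero_of_mem_unit_sphere ⟨x, hx⟩)).ne'
  refine ⟨(max C 1)⁻¹, by positivity, fun x => ?_⟩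
  rcases eq_or_ne x 0 with rfl | hx
  · simp
  have hxC : ratio x ≤ max C 1 := by
    have := hC (‖x‖⁻¹ • x) (by simp [norm_smul, norm_ne_zero_iff.2 hx])
    rw [hratio x _ (inv_ne_zero (norm_ne_zero_iff.2 hx)), Real.norm_eq_abs] at this
    exact (le_abs_self _).trans (this.trans (le_max_left _ _))
  rw [inv_mul_le_iff₀ (by positivity)]
  exact (div_le_iff₀ (hQ x hx)).1 hxC

theorem summable_pi_prod {α : Type*} {g : α → ℝ} (hg0 : 0 ≤ g) (hg : Summable g) :
    Summable fun k : ι → α => ∏ i, g (k i) := by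
  classical
  refine summable_of_sum_le (c := (∑' a, g a) ^ Fintype.card ι)
    (fun k => prod_nonneg fun i _ => hg0 _) fun s => ?_
  set S : Finset α := s.biUnion fun k => univ.image k
  have hsS : s ⊆ Fintype.piFinset fun _ => S := fun k hk =>
    Fintype.mem_piFinset.2 fun i => mem_biUnion.2 ⟨k, hk, mem_image_of_mem k (mem_univ i)⟩
  calc ∑ k ∈ s, ∏ i, g (k i)
      ≤ ∑ k ∈ Fintype.piFinset fun _ => S, ∏ i, g (k i) :=
        sum_le_sum_of_subset_of_nonneg hsS fun k _ _ => prod_nonneg fun i _ => hg0 _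
    _ = (∑ a ∈ S, g a) ^ Fintype.card ι := by rw [← prod_univ_sum, prod_const, card_univ]
    _ ≤ (∑' a, g a) ^ Fintype.card ι :=
        pow_le_pow_left₀ (sum_nonneg fun a _ => hg0 a) (hg.sum_le_tsum S fun a _ => hg0 a) _

theorem summable_int_exp_neg_mul_sq {a : ℝ} (ha : 0 < a) :
    Summable fun m : ℤ => exp (-(a * m ^ 2)) := by
  have hnat : Summable fun n : ℕ => exp (-(a * (n : ℝ) ^ 2)) := by
    simpa [neg_mul] using summable_exp_nat_mul_of_ge (neg_neg_of_pos ha)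
      (f := fun n : ℕ => (n : ℝ) ^ 2) fun n => by
        norm_cast; nlinarith
  exact .of_nat_of_neg (by simpa using hnat) (by simpa using hnat)

theorem Matrix.PosDef.summable_exp_neg_mul_intCast {M : Matrix ι ι ℝ} (hM : M.PosDef) {t : ℝ}
    (ht : 0 < t) : Summable fun k : ι → ℤ => exp (-(t * (((↑) ∘ k) ⬝ᵥ M *ᵥ ((↑) ∘ k)))) := by
  obtain ⟨c, hc, hcM⟩ := hM.exists_pos_mul_dotProduct_self_le
  refine (summable_pi_prod (fun m => (exp_pos _).le)
    (summable_int_exp_neg_mul_sq (mul_pos ht hc))).of_nonneg_of_le (fun k => (exp_pos _).le)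
    fun k => ?_
  rw [← exp_sum, exp_le_exp, sum_neg_distrib, neg_le_neg_iff, ← mul_sum, mul_assoc]
  gcongr
  simpa [dotProduct, sq] using hcM ((↑) ∘ k)

end IntegralGramMatrix

namespace LinearMap.BilinForm

variable {V : Type*} [AddCommGroup V] [Module ℝ V] {β : LinearMap.BilinForm ℝ V}

theorem IsSymm.apply_add_add_self (hβ : β.IsSymm) (v w : V) :
    β (v + w) (v + w) = β v v + 2 * β v w + β w w := by
  simp only [map_add, LinearMap.add_apply, hβ.eq w v]
  ring

theorem IsSymm.parallelogram_law (hβ : β.IsSymm) (v w : V) :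
    β (v + w) (v + w) + β (v - w) (v - w) = 2 * β v v + 2 * β w w := by
  rw [sub_eq_add_neg, hβ.apply_add_add_self, hβ.apply_add_add_self]
  simp only [map_neg, LinearMap.neg_apply]
  ring

theorem apply_smul_smul_self (c : ℝ) (v : V) : β (c • v) (c • v) = c ^ 2 * β v v := by
  simp only [map_smul, LinearMap.smul_apply, smul_eq_mul]
  ring

theorem sub_le_apply_add_add_self (hβ : β.IsSymm) (hβ0 : β.IsNonneg) (l u : V) {ε : ℝ}
    (hε : 0 < ε) : (1 - ε) * β u u - (ε⁻¹ - 1) * β l l ≤ β (l + u) (l + u) := by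
  have key : β (l + u) (l + u) - ((1 - ε) * β u u - (ε⁻¹ - 1) * β l l) =
      ε⁻¹ * β (ε • u + l) (ε • u + l) := by
    rw [hβ.apply_add_add_self, hβ.apply_add_add_self, apply_smul_smul_self, map_smul,
      LinearMap.smul_apply, smul_eq_mul, hβ.eq u l]
    field_simp
    ring
  linarith [mul_nonneg (inv_pos.2 hε).le (hβ0.nonneg (ε • u + l))]

end LinearMap.BilinForm

theorem Module.Basis.exists_equiv_two_smul_add {ι L : Type*} [Fintype ι] [AddCommGroup L]
    (b : Module.Basis ι ℤ L) :
    ∃ e : (ι → Fin 2) × L ≃ L, ∀ r γ, e (r, γ) = 2 • γ + ∑ i, (r i : ℤ) • b i := by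
  refine ⟨(Equiv.prodComm _ _).trans <|
    (Equiv.prodCongr b.equivFun.toEquiv (Equiv.refl _)).trans <|
    (Equiv.arrowProdEquivProdArrow _ _ _).symm.trans <|
    (Equiv.piCongrRight fun _ => (Int.divModEquiv 2).symm).trans b.equivFun.toEquiv.symm,
    fun r γ => ?_⟩
  simp [add_smul, sum_add_distrib, mul_comm, mul_smul, b.sum_repr, two_smul]

section Theta

variable {V L : Type*} [AddCommGroup V] [Module ℝ V] [AddCommGroup L]

variable (β : LinearMap.BilinForm ℝ V) (j : L →+ V)

noncomputable def thetaTerm (l : V) (t : ℝ) (α : L) : ℝ :=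
  exp (-(t * β (l + j α) (l + j α)))

noncomputable def theta (l : V) (t : ℝ) : ℝ :=
  ∑' α, thetaTerm β j l t α

variable {β j}

theorem thetaTerm_pos (l : V) (t : ℝ) (α : L) : 0 < thetaTerm β j l t α :=
  exp_pos _

theorem thetaTerm_le_exp_mul_thetaTerm_zero (hβ : β.IsSymm) (hβ0 : β.IsNonneg) (l : V)
    {t ε : ℝ} (ht : 0 ≤ t) (hε : 0 < ε) (α : L) :
    thetaTerm β j l t α ≤ exp (t * ((ε⁻¹ - 1) * β l l)) * thetaTerm β j 0 ((1 - ε) * t) α := by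
  rw [thetaTerm, thetaTerm, ← exp_add, exp_le_exp, zero_add]
  nlinarith [mul_le_mul_of_nonneg_left (β.sub_le_apply_add_add_self hβ hβ0 l (j α) hε) ht]

theorem summable_thetaTerm (hβ : β.IsSymm) (hβ0 : β.IsNonneg)
    (hsum : ∀ t > 0, Summable (thetaTerm β j 0 t)) (l : V) {t : ℝ} (ht : 0 < t) :
    Summable (thetaTerm β j l t) :=
  ((hsum _ (by positivity)).mul_left (exp (t * ((2⁻¹⁻¹ - 1) * β l l)))).of_nonneg_of_le
    (fun α => (thetaTerm_pos l t α).le)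
    (thetaTerm_le_exp_mul_thetaTerm_zero hβ hβ0 l ht.le (by norm_num))

theorem theta_le_exp_mul_theta_zero (hβ : β.IsSymm) (hβ0 : β.IsNonneg)
    (hsum : ∀ t > 0, Summable (thetaTerm β j 0 t)) (l : V) {t ε : ℝ} (ht : 0 < t)
    (hε0 : 0 < ε) (hε1 : ε < 1) :
    theta β j l t ≤ exp (t * ((ε⁻¹ - 1) * β l l)) * theta β j 0 ((1 - ε) * t) := by
  rw [theta, theta, ← tsum_mul_left]
  exact (summable_thetaTerm hβ hβ0 hsum l ht).tsum_le_tsum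
    (thetaTerm_le_exp_mul_thetaTerm_zero hβ hβ0 l ht.le hε0)
    ((hsum _ (mul_pos (sub_pos.2 hε1) ht)).mul_left _)

theorem exp_mul_thetaTerm_zero_le (hβ : β.IsSymm) (l : V) (t : ℝ) (α : L) :
    exp (-(t * β l l)) * thetaTerm β j 0 t α ≤
      (thetaTerm β j l t α + thetaTerm β j l t (-α)) / 2 := by
  have hpar := hβ.parallelogram_law l (j α)
  calc exp (-(t * β l l)) * thetaTerm β j 0 t α
      = exp ((1 / 2 : ℝ) • -(t * β (l + j α) (l + j α)) +
          (1 / 2 : ℝ) • -(t * β (l - j α) (l - j α))) := by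
        rw [thetaTerm, zero_add, ← exp_add, smul_eq_mul, smul_eq_mul]
        congr 1
        linear_combination (t / 2 : ℝ) * hpar
    _ ≤ (1 / 2 : ℝ) • exp (-(t * β (l + j α) (l + j α))) +
          (1 / 2 : ℝ) • exp (-(t * β (l - j α) (l - j α))) :=
        convexOn_exp.2 (Set.mem_univ _) (Set.mem_univ _) (by norm_num) (by norm_num)
          (add_halves 1)
    _ = (thetaTerm β j l t α + thetaTerm β j l t (-α)) / 2 := by
        simp only [thetaTerm, map_neg, ← sub_eq_add_neg, smul_eq_mul]
        ring

theorem exp_mul_theta_zero_le_theta (hβ : β.IsSymm) (hβ0 : β.IsNonneg)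
    (hsum : ∀ t > 0, Summable (thetaTerm β j 0 t)) (l : V) {t : ℝ} (ht : 0 < t) :
    exp (-(t * β l l)) * theta β j 0 t ≤ theta β j l t := by
  have hf := summable_thetaTerm hβ hβ0 hsum l ht
  have hf_neg : Summable fun α => thetaTerm β j l t (-α) := (Equiv.neg L).summable_iff.2 hf
  calc exp (-(t * β l l)) * theta β j 0 t
      = ∑' α, exp (-(t * β l l)) * thetaTerm β j 0 t α := tsum_mul_left.symm
    _ ≤ ∑' α, (thetaTerm β j l t α + thetaTerm β j l t (-α)) / 2 :=
        ((hsum t ht).mul_left _).tsum_le_tsum (exp_mul_thetaTerm_zero_le hβ l t)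
          ((hf.add hf_neg).div_const 2)
    _ = theta β j l t := by
        rw [tsum_div_const, hf.tsum_add hf_neg, tsum_comp_neg, theta]
        ring

theorem one_le_theta_zero (hsum : ∀ t > 0, Summable (thetaTerm β j 0 t)) {t : ℝ} (ht : 0 < t) :
    1 ≤ theta β j 0 t := by
  calc 1 = thetaTerm β j 0 t 0 := by simp [thetaTerm]
    _ ≤ theta β j 0 t := (hsum t ht).le_tsum 0 fun α _ => (thetaTerm_pos 0 t α).le

theorem convexOn_theta {l : V} (hl : ∀ t > 0, Summable (thetaTerm β j l t)) :
    ConvexOn ℝ (Set.Ioi 0) (theta β j l) := by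
  refine ⟨convex_Ioi 0, fun s hs t ht a b ha hb hab => ?_⟩
  have hsa := (hl s hs).mul_left a
  have htb := (hl t ht).mul_left b
  simp only [theta, smul_eq_mul, ← tsum_mul_left, ← hsa.tsum_add htb]
  refine (hl _ (convex_Ioi 0 hs ht ha hb hab)).tsum_le_tsum (fun α => ?_) (hsa.add htb)
  have := convexOn_exp.2 (Set.mem_univ (-(s * β (l + j α) (l + j α))))
    (Set.mem_univ (-(t * β (l + j α) (l + j α)))) ha hb hab
  simp only [thetaTerm, smul_eq_mul] at this ⊢
  exact le_of_eq_of_le (by ring_nf) this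

theorem theta_zero_div_four (hβ : β.IsSymm) (hβ0 : β.IsNonneg)
    (hsum : ∀ t > 0, Summable (thetaTerm β j 0 t)) {ι : Type*} [Fintype ι] [DecidableEq ι]
    (b : Module.Basis ι ℤ L) {t : ℝ} (ht : 0 < t) :
    theta β j 0 (t / 4) = ∑ r : ι → Fin 2, theta β j ((2 : ℝ)⁻¹ • j (∑ i, (r i : ℤ) • b i)) t := by
  obtain ⟨e, he⟩ := b.exists_equiv_two_smul_add
  have hterm : ∀ r γ, thetaTerm β j 0 (t / 4) (e (r, γ)) =
      thetaTerm β j ((2 : ℝ)⁻¹ • j (∑ i, (r i : ℤ) • b i)) t γ := by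
    intro r γ
    set ρ := ∑ i, (r i : ℤ) • b i
    have hj : j (2 • γ + ρ) = (2 : ℝ) • ((2 : ℝ)⁻¹ • j ρ + j γ) := by
      rw [map_add, map_nsmul, smul_add, smul_inv_smul₀ two_ne_zero, two_smul ℝ, two_nsmul]
      abel
    rw [thetaTerm, thetaTerm, he, zero_add, hj, LinearMap.BilinForm.apply_smul_smul_self]
    ring_nf
  calc theta β j 0 (t / 4) = ∑' p, thetaTerm β j 0 (t / 4) (e p) := (e.tsum_eq _).symm
    _ = ∑' (r) (γ), thetaTerm β j 0 (t / 4) (e (r, γ)) :=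
        Summable.tsum_prod' (e.summable_iff.2 (hsum _ (by positivity))) fun r => by
          simpa only [hterm] using summable_thetaTerm hβ hβ0 hsum _ ht
    _ = _ := by simp only [hterm, tsum_fintype, theta]

theorem exists_theta_zero_half_le (hβ : β.IsSymm) (hβ0 : β.IsNonneg)
    (hsum : ∀ t > 0, Summable (thetaTerm β j 0 t)) [Module.Free ℤ L] [Module.Finite ℤ L] :
    ∃ K, ∀ t ∈ Set.Ioc (0 : ℝ) 1, theta β j 0 (t / 2) ≤ K * theta β j 0 t := by
  classical
  set b := Module.Free.chooseBasis ℤ L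
  set v : (Module.Free.ChooseBasisIndex ℤ L → Fin 2) → V :=
    fun r => (2 : ℝ)⁻¹ • j (∑ i, (r i : ℤ) • b i)
  refine ⟨∑ r, exp (2 * β (v r) (v r)), fun t ⟨ht0, ht1⟩ => ?_⟩
  rw [show t / 2 = 2 * t / 4 by ring, theta_zero_div_four hβ hβ0 hsum b (by positivity), sum_mul]
  refine sum_le_sum fun r _ => ?_
  calc theta β j (v r) (2 * t)
      ≤ exp (2 * t * ((2⁻¹⁻¹ - 1) * β (v r) (v r))) * theta β j 0 ((1 - 2⁻¹) * (2 * t)) :=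
        theta_le_exp_mul_theta_zero hβ hβ0 hsum _ (by positivity) (by norm_num) (by norm_num)
    _ ≤ exp (2 * β (v r) (v r)) * theta β j 0 t := by
        rw [show (1 - 2⁻¹) * (2 * t) = t by ring, show (2 : ℝ)⁻¹⁻¹ - 1 = 1 by norm_num, one_mul]
        gcongr
        · exact zero_le_one.trans (one_le_theta_zero hsum ht0)
        · exact hβ0.nonneg (v r)
        · linarith

theorem theta_le_mul_theta_zero (hβ : β.IsSymm) (hβ0 : β.IsNonneg)
    (hsum : ∀ t > 0, Summable (thetaTerm β j 0 t)) {K : ℝ} (l : V) {t ε : ℝ} (ht : 0 < t)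
    (hK : theta β j 0 (t / 2) ≤ K * theta β j 0 t) (hε0 : 0 < ε) (hε : ε ≤ 1 / 2) :
    theta β j l t ≤ exp (t * ((ε⁻¹ - 1) * β l l)) * (2 * ε * K + (1 - 2 * ε)) * theta β j 0 t := by
  have hconv := (convexOn_theta hsum).2 (Set.mem_Ioi.2 (half_pos ht)) (Set.mem_Ioi.2 ht)
    (by linarith : 0 ≤ 2 * ε) (by linarith : 0 ≤ 1 - 2 * ε) (by ring)
  simp only [smul_eq_mul] at hconv
  rw [show 2 * ε * (t / 2) + (1 - 2 * ε) * t = (1 - ε) * t by ring] at hconv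
  calc theta β j l t ≤ exp (t * ((ε⁻¹ - 1) * β l l)) * theta β j 0 ((1 - ε) * t) :=
        theta_le_exp_mul_theta_zero hβ hβ0 hsum l ht hε0 (by linarith)
    _ ≤ exp (t * ((ε⁻¹ - 1) * β l l)) * (2 * ε * (K * theta β j 0 t) +
          (1 - 2 * ε) * theta β j 0 t) := by
        gcongr
        exact hconv.trans (by gcongr)
    _ = _ := by ring

theorem tendsto_theta_div_theta_zero (hβ : β.IsSymm) (hβ0 : β.IsNonneg)
    (hsum : ∀ t > 0, Summable (thetaTerm β j 0 t)) [Module.Free ℤ L] [Module.Finite ℤ L]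
    (l : V) : Tendsto (fun t => theta β j l t / theta β j 0 t) (𝓝[>] 0) (𝓝 1) := by
  obtain ⟨K, hK⟩ := exists_theta_zero_half_le hβ hβ0 hsum
  have hθ0 : ∀ t > 0, 0 < theta β j 0 t := fun t ht =>
    zero_lt_one.trans_le (one_le_theta_zero hsum ht)
  have hlim : ∀ f : ℝ → ℝ, Continuous f → f 0 = 1 → Tendsto f (𝓝[>] 0) (𝓝 1) :=
    fun f hf hf0 => hf0 ▸ hf.continuousWithinAt.tendsto
  -- squeeze the ratio, choosing `ε = √t` in the upper bound
  refine tendsto_of_tendsto_of_tendsto_of_le_of_le'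
    (hlim (fun t => exp (-(t * β l l))) (by fun_prop) (by simp))
    (hlim (fun t => exp ((√t - t) * β l l) * (2 * √t * K + (1 - 2 * √t))) (by fun_prop)
      (by simp)) ?_ ?_
  · filter_upwards [self_mem_nhdsWithin] with t ht
    rw [le_div_iff₀ (hθ0 t ht)]
    exact exp_mul_theta_zero_le_theta hβ hβ0 hsum l ht
  · filter_upwards [Ioo_mem_nhdsGT (by norm_num : (0 : ℝ) < 1 / 4)] with t ⟨ht0, ht1⟩
    have hε : √t ≤ 1 / 2 := sqrt_le_iff.2 ⟨by norm_num, by linarith⟩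
    have hexp : t * ((√t)⁻¹ - 1) = √t - t := by rw [mul_sub, ← div_eq_mul_inv, div_sqrt, mul_one]
    rw [div_le_iff₀ (hθ0 t ht0)]
    refine (theta_le_mul_theta_zero hβ hβ0 hsum l ht0 (hK t ⟨ht0, by linarith⟩)
      (sqrt_pos.2 ht0) hε).trans_eq ?_
    rw [← mul_assoc, hexp]

end Theta

theorem LinearMap.BilinForm.isNonneg_of_posSemidef_toMatrix {V ι : Type*} [AddCommGroup V]
    [Module ℝ V] [Fintype ι] [DecidableEq ι] (b : Module.Basis ι ℝ V)
    {β : LinearMap.BilinForm ℝ V} (hβ : (toMatrix b β).PosSemidef) : β.IsNonneg :=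
  ⟨fun v => by
    simpa [← apply_eq_dotProduct_toMatrix_mulVec] using hβ.dotProduct_mulVec_nonneg (b.repr v)⟩

section BaseChange

variable {L ι : Type*} [AddCommGroup L] [Fintype ι] [DecidableEq ι] (b : Module.Basis ι ℤ L)
  {BR : LinearMap.BilinForm ℝ (ℝ ⊗[ℤ] L)} {B : L → L → ℤ}

theorem toMatrix_baseChange_eq_map_intCast
    (hBR : ∀ x y, BR ((1 : ℝ) ⊗ₜ[ℤ] x) ((1 : ℝ) ⊗ₜ[ℤ] y) = B x y) :
    LinearMap.BilinForm.toMatrix (b.baseChange ℝ) BR =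
      (Matrix.of fun i j => B (b i) (b j)).map ((↑) : ℤ → ℝ) := by
  ext i j
  simp [LinearMap.BilinForm.toMatrix_apply, hBR]

theorem apply_one_tmul_one_tmul_eq_dotProduct
    (hBR : ∀ x y, BR ((1 : ℝ) ⊗ₜ[ℤ] x) ((1 : ℝ) ⊗ₜ[ℤ] y) = B x y) (α : L) :
    BR ((1 : ℝ) ⊗ₜ[ℤ] α) ((1 : ℝ) ⊗ₜ[ℤ] α) = ((↑) ∘ b.equivFun α) ⬝ᵥ
      (Matrix.of fun i j => B (b i) (b j)).map ((↑) : ℤ → ℝ) *ᵥ ((↑) ∘ b.equivFun α) := by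
  rw [LinearMap.BilinForm.apply_eq_dotProduct_toMatrix_mulVec (b.baseChange ℝ),
    toMatrix_baseChange_eq_map_intCast b hBR]
  congr <;> ext i <;> simp [Module.Basis.baseChange_repr_tmul]

theorem posDef_map_gram (hsymm : ∀ x y, B x y = B y x) (hpos : ∀ x, x ≠ 0 → 0 < B x x)
    (hBR : ∀ x y, BR ((1 : ℝ) ⊗ₜ[ℤ] x) ((1 : ℝ) ⊗ₜ[ℤ] y) = B x y) :
    ((Matrix.of fun i j => B (b i) (b j)).map ((↑) : ℤ → ℝ)).PosDef := by
  refine posDef_map_intCast (IsSymm.ext fun i j => hsymm _ _) fun k hk => ?_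
  have h := apply_one_tmul_one_tmul_eq_dotProduct b hBR (b.equivFun.symm k)
  rw [hBR, LinearEquiv.apply_symm_apply, intCast_dotProduct_mulVec, Int.cast_inj] at h
  exact h ▸ hpos _ (b.equivFun.symm.map_ne_zero_iff.2 hk)

theorem summable_thetaTerm_zero_one_tmul
    (hBR : ∀ x y, BR ((1 : ℝ) ⊗ₜ[ℤ] x) ((1 : ℝ) ⊗ₜ[ℤ] y) = B x y)
    (hM : ((Matrix.of fun i j => B (b i) (b j)).map ((↑) : ℤ → ℝ)).PosDef) {t : ℝ} (ht : 0 < t) :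
    Summable (thetaTerm BR (TensorProduct.mk ℤ ℝ L 1).toAddMonoidHom 0 t) := by
  refine (b.equivFun.toEquiv.summable_iff.2 (hM.summable_exp_neg_mul_intCast ht)).congr fun α => ?_
  simp [thetaTerm, apply_one_tmul_one_tmul_eq_dotProduct b hBR]

end BaseChange

theorem neg_log_div_two_pos {q : ℝ} (hq : q ∈ Set.Ioo 0 1) : 0 < -log q / 2 := by
  linarith [log_neg hq.1 hq.2]

theorem tendsto_neg_log_div_two_nhdsLT_one :
    Tendsto (fun q : ℝ => -log q / 2) (𝓝[<] 1) (𝓝[>] 0) := by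
  refine tendsto_nhdsWithin_iff.2 ⟨?_, ?_⟩
  · simpa using ((continuousAt_log one_ne_zero).neg.div_const 2).tendsto.mono_left
      nhdsWithin_le_nhds
  · filter_upwards [Ioo_mem_nhdsLT zero_lt_one] with q hq using neg_log_div_two_pos hq

theorem stmt_6_general (L : Type*) [AddCommGroup L] [Module.Free ℤ L] [Module.Finite ℤ L]
    (B : L → L → ℤ)
    (hsymm : ∀ x y : L, B x y = B y x)
    (hpos : ∀ x : L, x ≠ 0 → 0 < B x x)
    (BR : (ℝ ⊗[ℤ] L) →ₗ[ℝ] (ℝ ⊗[ℤ] L) →ₗ[ℝ] ℝ)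
    (hBRsymm : ∀ v w : ℝ ⊗[ℤ] L, BR v w = BR w v)
    (hBR : ∀ x y : L, BR ((1 : ℝ) ⊗ₜ[ℤ] x) ((1 : ℝ) ⊗ₜ[ℤ] y) = (B x y : ℝ))
    (lam : ℝ ⊗[ℤ] L) :
    (∀ q ∈ Set.Ioo (0 : ℝ) 1,
      Summable fun α : L =>
        q ^ (BR (lam + (1 : ℝ) ⊗ₜ[ℤ] α) (lam + (1 : ℝ) ⊗ₜ[ℤ] α) / 2)) ∧
    Filter.Tendsto
      (fun q : ℝ =>
        (∑' α : L, q ^ (BR (lam + (1 : ℝ) ⊗ₜ[ℤ] α) (lam + (1 : ℝ) ⊗ₜ[ℤ] α) / 2)) /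
        (∑' α : L, q ^ ((B α α : ℝ) / 2)))
      (nhdsWithin 1 (Set.Iio 1)) (nhds 1) := by
  classical
  set b := Module.Free.chooseBasis ℤ L
  have hM := posDef_map_gram b hsymm hpos hBR
  have hβ : LinearMap.BilinForm.IsSymm BR := ⟨hBRsymm⟩
  have hβ0 : LinearMap.BilinForm.IsNonneg BR :=
    LinearMap.BilinForm.isNonneg_of_posSemidef_toMatrix (b.baseChange ℝ)
      (toMatrix_baseChange_eq_map_intCast b hBR ▸ hM.posSemidef)
  have hsum := fun t (ht : 0 < t) => summable_thetaTerm_zero_one_tmul b hBR hM ht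
  have hrpow : ∀ q ∈ Set.Ioo (0 : ℝ) 1, ∀ x, q ^ (x / 2) = exp (-(-log q / 2 * x)) :=
    fun q hq x => by rw [rpow_def_of_pos hq.1]; ring_nf
  refine ⟨fun q hq => ?_, ?_⟩
  · simp only [hrpow q hq]
    exact summable_thetaTerm hβ hβ0 hsum lam (neg_log_div_two_pos hq)
  refine ((tendsto_theta_div_theta_zero hβ hβ0 hsum lam).comp
    tendsto_neg_log_div_two_nhdsLT_one).congr' ?_
  filter_upwards [Ioo_mem_nhdsLT zero_lt_one] with q hq
  simp [theta, thetaTerm, hrpow q hq, ← hBR]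

/-- For a positive-definite lattice `L` with form extended ℝ-bilinearly to
`L ⊗ ℝ` and `λ ∈ L ⊗ ℝ`, the theta series `θ_{λ+L}(q) = Σ_{α∈L} q^((λ+α|λ+α)/2)`
converges for `q ∈ (0,1)`, and `lim_{q→1⁻} θ_{λ+L}(q)/θ_L(q) = 1`. -/
theorem stmt_6 (L : Type*) [AddCommGroup L] [Module.Free ℤ L] [Module.Finite ℤ L]
    (B : L → L → ℤ)
    (haddl : ∀ x x' y : L, B (x + x') y = B x y + B x' y)
    (haddr : ∀ x y y' : L, B x (y + y') = B x y + B x y')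
    (hsymm : ∀ x y : L, B x y = B y x)
    (hpos : ∀ x : L, x ≠ 0 → 0 < B x x)
    (BR : (ℝ ⊗[ℤ] L) →ₗ[ℝ] (ℝ ⊗[ℤ] L) →ₗ[ℝ] ℝ)
    (hBRsymm : ∀ v w : ℝ ⊗[ℤ] L, BR v w = BR w v)
    (hBR : ∀ x y : L, BR ((1 : ℝ) ⊗ₜ[ℤ] x) ((1 : ℝ) ⊗ₜ[ℤ] y) = (B x y : ℝ))
    (lam : ℝ ⊗[ℤ] L) :
    (∀ q ∈ Set.Ioo (0 : ℝ) 1,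
      Summable fun α : L =>
        q ^ (BR (lam + (1 : ℝ) ⊗ₜ[ℤ] α) (lam + (1 : ℝ) ⊗ₜ[ℤ] α) / 2)) ∧
    Filter.Tendsto
      (fun q : ℝ =>
        (∑' α : L, q ^ (BR (lam + (1 : ℝ) ⊗ₜ[ℤ] α) (lam + (1 : ℝ) ⊗ₜ[ℤ] α) / 2)) /
        (∑' α : L, q ^ ((B α α : ℝ) / 2)))
      (nhdsWithin 1 (Set.Iio 1)) (nhds 1) :=
  stmt_6_general L B hsymm hpos BR hBRsymm hBR lam
end

section
/- Let n = 2l be even, let Q = ℤⁿ be the Aₙ root lattice with Cartan form (αᵢ|αⱼ) = 2δ_{ij} − δ_{|i−j|,1}, and let σ be the diagram automorphism σ(αᵢ) = α_{n+1−i}. Then for γ = Σᵢ cᵢαᵢ ∈ Q one has (γ|σγ) ∈ 2ℤ if and only if c_l + c_{l+1} ∈ 2ℤ. Consequently the sublattice Q̄ = {γ ∈ Q : (γ|σγ) ∈ 2ℤ} equals Σ_{i=1}^{l−1} ℤαᵢ + ℤ(α_l + α_{l+1}) + ℤ(α_l − α_{l+1}) + Σ_{i=l+2}^{n} ℤαᵢ,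 a sublattice of index 2 in Q. -/
/-!
Reindexing `j ↦ j.rev` writes `(γ|σγ) = ∑ᵢⱼ γᵢ γⱼ A_{i, rev j}`, and the matrix `A_{i, rev j}` is
symmetric because `σ` is a diagram automorphism. Modulo 2 the off-diagonal terms of a symmetric
quadratic form cancel in pairs and `γᵢ² ≡ γᵢ`, so `(γ|σγ) ≡ ∑ᵢ A_{i, rev i} γᵢ`. For `n = 2l` the
node `i` is adjacent to `rev i` exactly for the two middle nodes, giving `(γ|σγ) ≡ c_l + c_{l+1}`.
Hence `Q̄` is the kernel of the surjection `γ ↦ c_l + c_{l+1} mod 2` onto `ZMod 2`, and the listed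
vectors generate this kernel.
-/

open Finset

theorem sum_sum_eq_sum_diag_of_charTwo {R ι : Type*} [Ring R] [CharP R 2] [Fintype ι]
    (f : ι → ι → R) (hf : ∀ i j, f i j = f j i) : ∑ i, ∑ j, f i j = ∑ i, f i i := by
  classical
  have off_diag : ∑ p ∈ (univ : Finset ι).offDiag, f p.1 p.2 = 0 :=
    sum_involution (fun p _ => p.swap)
      (fun p _ => by simp [hf p.2 p.1, CharTwo.add_self_eq_zero])
      (fun p hp _ => by simpa [Prod.ext_iff, eq_comm] using (mem_offDiag.mp hp).2.2)
      (fun p hp => by simpa [and_comm, eq_comm] using hp) (fun _ _ => rfl)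
  rw [← sum_product', ← diag_union_offDiag, sum_union (disjoint_diag_offDiag _), sum_diag,
    off_diag, add_zero]

namespace CartanMatrix

theorem A_apply_rev_rev {n : ℕ} (i j : Fin n) : A n i.rev j.rev = A n i j := by
  simp only [A, Matrix.of_apply, Fin.rev_inj, Fin.val_rev]
  congr 2
  apply propext
  omega

theorem A_apply_rev_comm {n : ℕ} (i j : Fin n) : A n i j.rev = A n j i.rev := by
  rw [← A_apply_rev_rev, Fin.rev_rev, (A_isSymm n).apply]

theorem A_apply_self_rev {n l : ℕ} (hn : n = 2 * l) (i : Fin n) :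
    A n i i.rev = if (i : ℕ) = l - 1 ∨ (i : ℕ) = l then -1 else 0 := by
  have hi := i.isLt
  have not_fixed : i ≠ i.rev := by rw [Ne, Fin.ext_iff, Fin.val_rev]; omega
  simp only [A, Matrix.of_apply, if_neg not_fixed, Fin.val_rev]
  congr 1
  apply propext
  omega

theorem intCast_sum_mul_rev_A {n l : ℕ} (hn : n = 2 * l) {a b : Fin n} (ha : (a : ℕ) = l - 1)
    (hb : (b : ℕ) = l) (γ : Fin n → ℤ) :
    ((∑ i, ∑ j, γ i * γ j.rev * A n i j : ℤ) : ZMod 2) = γ a + γ b := by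
  have hab : a ≠ b := by rw [Ne, Fin.ext_iff]; omega
  have idem : ∀ x : ZMod 2, x * x = x := by decide
  have reindex (i : Fin n) :
      ∑ j, γ i * γ j.rev * A n i j = ∑ j, γ i * γ j * A n i j.rev := by
    rw [← Equiv.sum_comp Fin.revPerm fun j => γ i * γ j * A n i j.rev]
    simp
  simp only [reindex]
  push_cast
  rw [sum_sum_eq_sum_diag_of_charTwo _ fun i j => by rw [A_apply_rev_comm]; ring,
    Fintype.sum_eq_add a b hab fun i hi => ?_]
  · simp [A_apply_self_rev hn, ha, hb, idem]
  have : ¬((i : ℕ) = l - 1 ∨ (i : ℕ) = l) := by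
    rw [← ha, ← hb, ← Fin.ext_iff, ← Fin.ext_iff]
    tauto
  simp [A_apply_self_rev hn, this]

theorem two_dvd_sum_mul_rev_A_iff {n l : ℕ} (hn : n = 2 * l) {a b : Fin n}
    (ha : (a : ℕ) = l - 1) (hb : (b : ℕ) = l) (γ : Fin n → ℤ) :
    2 ∣ ∑ i, ∑ j, γ i * γ j.rev * A n i j ↔ 2 ∣ γ a + γ b := by
  have two_dvd_iff (x : ℤ) : 2 ∣ x ↔ (x : ZMod 2) = 0 := by
    simpa using (ZMod.intCast_zmod_eq_zero_iff_dvd x 2).symm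
  rw [two_dvd_iff, two_dvd_iff, intCast_sum_mul_rev_A hn ha hb, Int.cast_add]

end CartanMatrix

section SumParity

variable {ι : Type*} (a b : ι)

def sumParity : (ι → ℤ) →+ ZMod 2 :=
  (Int.castAddHom (ZMod 2)).comp (Pi.evalAddMonoidHom (fun _ => ℤ) a + Pi.evalAddMonoidHom _ b)

@[simp]
theorem sumParity_apply (γ : ι → ℤ) : sumParity a b γ = ((γ a + γ b : ℤ) : ZMod 2) := rfl

theorem mem_ker_sumParity {γ : ι → ℤ} : γ ∈ (sumParity a b).ker ↔ 2 ∣ γ a + γ b := by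
  simpa using ZMod.intCast_zmod_eq_zero_iff_dvd (γ a + γ b) 2

variable [DecidableEq ι] {a b}

theorem sumParity_surjective (hab : a ≠ b) : Function.Surjective (sumParity a b) := by
  intro z
  refine ⟨Pi.single a z.val, ?_⟩
  simp [Pi.single_eq_of_ne' hab]

theorem card_quotient_ker_sumParity (hab : a ≠ b) :
    Nat.card ((ι → ℤ) ⧸ (sumParity a b).ker) = 2 := by
  rw [Nat.card_congr
    (QuotientAddGroup.quotientKerEquivOfSurjective _ (sumParity_surjective hab)).toEquiv,
    Nat.card_zmod]

theorem closure_eq_ker_sumParity [Fintype ι] (hab : a ≠ b) :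
    AddSubgroup.closure ({v : ι → ℤ | ∃ i, i ≠ a ∧ i ≠ b ∧ v = Pi.single i 1} ∪
      {Pi.single a 1 + Pi.single b 1, Pi.single a 1 - Pi.single b 1}) = (sumParity a b).ker := by
  set H := AddSubgroup.closure ({v : ι → ℤ | ∃ i, i ≠ a ∧ i ≠ b ∧ v = Pi.single i 1} ∪
      {Pi.single a 1 + Pi.single b 1, Pi.single a 1 - Pi.single b 1})
  apply le_antisymm
  · rw [AddSubgroup.closure_le]
    rintro v (⟨i, hia, hib, rfl⟩ | rfl | rfl) <;>
      simp only [SetLike.mem_coe, mem_ker_sumParity] <;>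
      simp [hab.symm, *]
  intro γ hγ
  obtain ⟨m, hm⟩ := (mem_ker_sumParity a b).mp hγ
  have single_mem (i : ι) (hia : i ≠ a) (hib : i ≠ b) (c : ℤ) : Pi.single i c ∈ H := by
    have gen : Pi.single i (1 : ℤ) ∈ H :=
      AddSubgroup.subset_closure (Or.inl ⟨i, hia, hib, rfl⟩)
    simpa [← Pi.single_smul] using zsmul_mem gen c
  have plus_mem : Pi.single a (1 : ℤ) + Pi.single b 1 ∈ H :=
    AddSubgroup.subset_closure (by simp)
  have minus_mem : Pi.single a (1 : ℤ) - Pi.single b 1 ∈ H :=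
    AddSubgroup.subset_closure (by simp)
  let δ : ι → ℤ :=
    m • (Pi.single a 1 + Pi.single b 1) + (γ a - m) • (Pi.single a 1 - Pi.single b 1)
  have pair_mem : δ ∈ H := add_mem (zsmul_mem plus_mem m) (zsmul_mem minus_mem _)
  -- `δ` agrees with `γ` at `a` and `b` because `γ a + γ b = 2 * m`.
  have rest_mem : γ - δ ∈ H := by
    have vanish_a : (γ - δ) a = 0 := by simp [δ, hab]
    have vanish_b : (γ - δ) b = 0 := by simp [δ, hab.symm]; omega
    rw [← univ_sum_single (γ - δ)]
    refine sum_mem fun i _ => ?_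
    by_cases hia : i = a
    · rw [hia, vanish_a, Pi.single_zero]; exact zero_mem H
    by_cases hib : i = b
    · rw [hib, vanish_b, Pi.single_zero]; exact zero_mem H
    exact single_mem i hia hib _
  simpa using add_mem rest_mem pair_mem

end SumParity

/-- For `n = 2l` even and the diagram automorphism `σ` of the `Aₙ` root lattice
(on `ℤⁿ` with the Cartan form, 0-based coordinates): `(γ|σγ) ∈ 2ℤ` iff
`c_l + c_{l+1} ∈ 2ℤ` (1-based; 0-based indices `l-1` and `l`), the sublattice
`Q̄ = {γ : (γ|σγ) ∈ 2ℤ}` is generated by the `αᵢ` for `i ∉ {l, l+1}` together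
with `α_l + α_{l+1}` and `α_l - α_{l+1}`, and it has index 2 in `Q`. -/
theorem stmt_16 (n l : ℕ) (hl : 1 ≤ l) (hn : n = 2 * l) :
    let C : Fin n → Fin n → ℤ := fun i j =>
      if i = j then 2 else if (i : ℕ) + 1 = (j : ℕ) ∨ (j : ℕ) + 1 = (i : ℕ) then -1 else 0
    let B : (Fin n → ℤ) → (Fin n → ℤ) → ℤ := fun x y => ∑ i, ∑ j, x i * y j * C i j
    let σ : (Fin n → ℤ) → (Fin n → ℤ) := fun x i => x i.rev
    let il : Fin n := ⟨l - 1, by omega⟩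
    let il1 : Fin n := ⟨l, by omega⟩
    let Qbar : AddSubgroup (Fin n → ℤ) := AddSubgroup.closure
      ({v : Fin n → ℤ | ∃ i : Fin n, i ≠ il ∧ i ≠ il1 ∧ v = Pi.single i 1} ∪
        {Pi.single il 1 + Pi.single il1 1, Pi.single il 1 - Pi.single il1 1})
    (∀ γ : Fin n → ℤ, 2 ∣ B γ (σ γ) ↔ 2 ∣ (γ il + γ il1)) ∧
    (∀ γ : Fin n → ℤ, γ ∈ Qbar ↔ 2 ∣ B γ (σ γ)) ∧
    Nat.card ((Fin n → ℤ) ⧸ Qbar) = 2 := by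
  intro C B σ il il1 Qbar
  have hab : il ≠ il1 := Fin.ne_of_val_ne (by simp only [il, il1]; omega)
  have parity (γ : Fin n → ℤ) : 2 ∣ B γ (σ γ) ↔ 2 ∣ γ il + γ il1 :=
    CartanMatrix.two_dvd_sum_mul_rev_A_iff hn rfl rfl γ
  have Qbar_eq : Qbar = (sumParity il il1).ker := closure_eq_ker_sumParity hab
  refine ⟨parity, fun γ => ?_, ?_⟩
  · rw [Qbar_eq, mem_ker_sumParity, parity]
  · rw [Qbar_eq]
    exact card_quotient_ker_sumParity hab
end
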